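/- arXiv:1705.08565 — 2 statements merged into one kernel-verified Lean document; each statement's English description precedes it below -/
import Mathlib

section
/- Let D be a triangulated category with a t-structure t. The triangulated factorization system F_t = (E_t, M_t) is a normal triangulated torsion theory: both E_t and M_t satisfy the 3-for-2 property, and whenever X → 0 factors as X →e→ T →m→ 0 with e ∈ E_t, m ∈ M_t, and R → X →e→ T → ΣR is a distinguished triangle, the morphism R → 0 belongs to E_t. -/
/-!
Both classes are inverse images of the isomorphisms under a functor, hence satisfy 3-for-2.
By the universal properties of the truncations they are also Bousfield classes: `E_t` consists
of the maps inverted by `Hom(-, W)` for all `W ∈ D^{≥1}`, and `M_t` of those inverted by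
`Hom(A, -)` for all `A ∈ D^{≤0}`. Reading this off the long exact sequences of a triangle
`X → Y → C → X⟦1⟧`: the map `X → Y` lies in `E_t` iff `C ∈ D^{≤0}` and `C → X⟦1⟧` kills every
shifted map `X → D^{≥1}`, and it lies in `M_t` iff `C ∈ D^{≥0}` and `Y → C` kills every map from
`D^{≤0}`. These criteria give homotopy orthogonality, and applied to the triangles on
`0 ⇄ A` and `B ⇄ 0` they recover each class from its orthogonal.
A factorization of `f : X → Y` passes through the fibre of `τ^{≥1} X → (τ^{≤0} Y)⟦1⟧`. Normality
holds because a triangle `R → X → T` with `X → T` in `E_t` and `T ∈ D^{≥1}` is a truncation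
triangle of `X`, so `R ∈ D^{≤0}`.
-/

open CategoryTheory Category Limits Pretriangulated ZeroObject

universe v u w

section Defs

variable {D : Type u} [Category.{v} D] [HasZeroObject D] [Preadditive D]
  [HasShift D ℤ] [∀ n : ℤ, (shiftFunctor D n).Additive] [Pretriangulated D]

/-- Homotopy orthogonality (Def. 1.1): conditions (HO1) and (HO2), stated for every
completion of `e` and `m` to distinguished triangles. -/
def HOrth {E₀ E₁ M₀ M₁ : D} (e : E₀ ⟶ E₁) (m : M₀ ⟶ M₁) : Prop :=
  ∀ (Ce : D) (αe : E₁ ⟶ Ce) (βe : Ce ⟶ E₀⟦(1:ℤ)⟧),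
    Triangle.mk e αe βe ∈ (distTriang D) →
    ∀ (Cm : D) (αm : M₁ ⟶ Cm) (βm : Cm ⟶ M₀⟦(1:ℤ)⟧),
      Triangle.mk m αm βm ∈ (distTriang D) →
      (∀ φ : Ce ⟶ Cm⟦(-1:ℤ)⟧,
        αe ≫ φ ≫ βm⟦(-1:ℤ)⟧' ≫
          (shiftFunctorCompIsoId D (1:ℤ) (-1:ℤ) (by omega)).hom.app M₀ = 0) ∧
      Function.Injective (fun φ : Ce ⟶ Cm => αe ≫ φ ≫ βm)

/-- The right homotopy-orthogonal class `E^⊥`. -/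
def rightOrth (E : MorphismProperty D) : MorphismProperty D :=
  fun _ _ m => ∀ ⦃A B : D⦄ (e : A ⟶ B), E e → HOrth e m

/-- The left homotopy-orthogonal class `^⊥M`. -/
def leftOrth (M : MorphismProperty D) : MorphismProperty D :=
  fun _ _ e => ∀ ⦃A B : D⦄ (m : A ⟶ B), M m → HOrth e m

/-- The 3-for-2 property for a class of morphisms. -/
def ThreeForTwo (P : MorphismProperty D) : Prop :=
  ∀ ⦃X Y Z : D⦄ (f : X ⟶ Y) (g : Y ⟶ Z),
    (P f → P g → P (f ≫ g)) ∧ (P f → P (f ≫ g) → P g) ∧ (P g → P (f ≫ g) → P f)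

/-- A triangulated pre-factorization system (Def. 1.12(1)). -/
structure IsTriPFS (E M : MorphismProperty D) : Prop where
  right_eq : rightOrth E = M
  left_eq : leftOrth M = E
  shiftE : ∀ ⦃X Y : D⦄ (f : X ⟶ Y), E f → E (f⟦(1:ℤ)⟧')

/-- A triangulated factorization system (Def. 1.12(2)). -/
structure IsTriFS (E M : MorphismProperty D) extends IsTriPFS E M : Prop where
  fact : ∀ ⦃X Y : D⦄ (f : X ⟶ Y),
    ∃ (P : D) (e : X ⟶ P) (m : P ⟶ Y), E e ∧ M m ∧ e ≫ m = f

/-- A normal triangulated torsion theory (Defs. 1.15, 1.16). -/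
structure IsNormalTTT (E M : MorphismProperty D) extends IsTriFS E M : Prop where
  three_E : ThreeForTwo E
  three_M : ThreeForTwo M
  normal : ∀ ⦃X T : D⦄ (e : X ⟶ T) (m : T ⟶ (0:D)), E e → M m →
    ∀ ⦃R : D⦄ (r : R ⟶ X) (δ : T ⟶ R⟦(1:ℤ)⟧),
      Triangle.mk r e δ ∈ (distTriang D) → E (0 : R ⟶ (0:D))

/-- A middling good morphism of triangles (Neeman): one extending to a 3×3 diagram
whose rows and columns are distinguished triangles, all squares commuting except
the lower-right one, which anticommutes. -/
def MiddlingGood {A₀ B₀ C₀ A₁ B₁ C₁ : D}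
    (φ₀ : A₀ ⟶ B₀) (ψ₀ : B₀ ⟶ C₀) (δ₀ : C₀ ⟶ A₀⟦(1:ℤ)⟧)
    (φ₁ : A₁ ⟶ B₁) (ψ₁ : B₁ ⟶ C₁) (δ₁ : C₁ ⟶ A₁⟦(1:ℤ)⟧)
    (a : A₀ ⟶ A₁) (b : B₀ ⟶ B₁) (c : C₀ ⟶ C₁) : Prop :=
  ∃ (Ca Cb Cc : D)
    (αa : A₁ ⟶ Ca) (βa : Ca ⟶ A₀⟦(1:ℤ)⟧)
    (αb : B₁ ⟶ Cb) (βb : Cb ⟶ B₀⟦(1:ℤ)⟧)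
    (αc : C₁ ⟶ Cc) (βc : Cc ⟶ C₀⟦(1:ℤ)⟧)
    (fa : Ca ⟶ Cb) (fb : Cb ⟶ Cc) (δ : Cc ⟶ Ca⟦(1:ℤ)⟧),
    Triangle.mk a αa βa ∈ (distTriang D) ∧
    Triangle.mk b αb βb ∈ (distTriang D) ∧
    Triangle.mk c αc βc ∈ (distTriang D) ∧
    Triangle.mk fa fb δ ∈ (distTriang D) ∧
    φ₁ ≫ αb = αa ≫ fa ∧
    ψ₁ ≫ αc = αb ≫ fb ∧
    δ₁ ≫ αa⟦(1:ℤ)⟧' = αc ≫ δ ∧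
    βa ≫ φ₀⟦(1:ℤ)⟧' = fa ≫ βb ∧
    βb ≫ ψ₀⟦(1:ℤ)⟧' = fb ≫ βc ∧
    δ ≫ βa⟦(1:ℤ)⟧' = -(βc ≫ δ₀⟦(1:ℤ)⟧')

end Defs

/-- A t-structure on a triangulated category (Def. 2.1), together with choices of the
truncation functors `τ^{≤0}` (right adjoint to the inclusion of `D^{≤0}`) and
`τ^{≥1}` (left adjoint to the inclusion of `D^{≥1}`).  Here `ge` is `D^{≥0}` and
membership of `X` in `D^{≥1} = Σ⁻¹ D^{≥0}` is expressed as `X⟦1⟧ ∈ ge`. -/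
structure TData (D : Type u) [Category.{v} D] [HasZeroObject D] [Preadditive D]
    [HasShift D ℤ] [∀ n : ℤ, (shiftFunctor D n).Additive] [Pretriangulated D] where
  le : Set D
  ge : Set D
  le_iso : ∀ ⦃X Y : D⦄, (X ≅ Y) → X ∈ le → Y ∈ le
  ge_iso : ∀ ⦃X Y : D⦄, (X ≅ Y) → X ∈ ge → Y ∈ ge
  shift_le : ∀ ⦃X : D⦄, X ∈ le → X⟦(1:ℤ)⟧ ∈ le
  shift_ge : ∀ ⦃X : D⦄, X⟦(1:ℤ)⟧ ∈ ge → X ∈ ge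
  hom_zero : ∀ ⦃X Y : D⦄ (f : X ⟶ Y), X ∈ le → Y⟦(1:ℤ)⟧ ∈ ge → f = 0
  tri : ∀ X : D, ∃ (A B : D) (i : A ⟶ X) (p : X ⟶ B) (δ : B ⟶ A⟦(1:ℤ)⟧),
    A ∈ le ∧ B⟦(1:ℤ)⟧ ∈ ge ∧ Triangle.mk i p δ ∈ (distTriang D)
  tle : D ⥤ D
  σ : tle ⟶ 𝟭 D
  tle_mem : ∀ X : D, tle.obj X ∈ le
  tle_univ : ∀ ⦃A : D⦄, A ∈ le → ∀ X : D,
    Function.Bijective (fun g : A ⟶ tle.obj X => g ≫ σ.app X)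
  tge : D ⥤ D
  ρ : 𝟭 D ⟶ tge
  tge_mem : ∀ X : D, (tge.obj X)⟦(1:ℤ)⟧ ∈ ge
  tge_univ : ∀ X : D, ∀ ⦃B : D⦄, B⟦(1:ℤ)⟧ ∈ ge →
    Function.Bijective (fun g : tge.obj X ⟶ B => ρ.app X ≫ g)

section TDefs

variable {D : Type u} [Category.{v} D] [HasZeroObject D] [Preadditive D]
  [HasShift D ℤ] [∀ n : ℤ, (shiftFunctor D n).Additive] [Pretriangulated D]

/-- `E_t`: morphisms `φ` with `τ^{≥1} φ` invertible. -/
def Et (t : TData D) : MorphismProperty D := fun _ _ φ => IsIso (t.tge.map φ)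

/-- `M_t`: morphisms `φ` with `τ^{≤0} φ` invertible. -/
def Mt (t : TData D) : MorphismProperty D := fun _ _ φ => IsIso (t.tle.map φ)

end TDefs

namespace CategoryTheory.ObjectProperty

variable {C : Type*} [Category C] (P : ObjectProperty C)

lemma isLocal_iff_isIso_map_of_isLocal_app (F : C ⥤ C) (ρ : 𝟭 C ⟶ F)
    (hF : ∀ X, P (F.obj X)) (hρ : ∀ X, P.isLocal (ρ.app X)) {X Y : C} (f : X ⟶ Y) :
    P.isLocal f ↔ IsIso (F.map f) := by
  rw [← P.isLocal.postcomp_iff _ _ (hρ Y),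
    show f ≫ ρ.app Y = ρ.app X ≫ F.map f from ρ.naturality f,
    P.isLocal.precomp_iff _ _ (hρ X), P.isLocal_iff_isIso _ (hF X) (hF Y)]

lemma isColocal_iff_isIso_map_of_isColocal_app (F : C ⥤ C) (σ : F ⟶ 𝟭 C)
    (hF : ∀ X, P (F.obj X)) (hσ : ∀ X, P.isColocal (σ.app X)) {X Y : C} (f : X ⟶ Y) :
    P.isColocal f ↔ IsIso (F.map f) := by
  rw [← P.isColocal.precomp_iff _ _ (hσ X),
    ← show F.map f ≫ σ.app Y = σ.app X ≫ f from σ.naturality f,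
    P.isColocal.postcomp_iff _ _ (hσ Y), P.isColocal_iff_isIso _ (hF X) (hF Y)]

end CategoryTheory.ObjectProperty

lemma threeForTwo_of_hasTwoOutOfThreeProperty {C : Type*} [Category C]
    (P : MorphismProperty C) [P.HasTwoOutOfThreeProperty] : ThreeForTwo P :=
  fun _ _ _ f g => ⟨P.comp_mem f g, P.of_precomp f g, P.of_postcomp f g⟩

section TStructure

variable {D : Type u} [Category.{v} D] [HasZeroObject D] [Preadditive D]
  [HasShift D ℤ] [∀ n : ℤ, (shiftFunctor D n).Additive] [Pretriangulated D]

namespace TData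

variable (t : TData D)

def geOne : ObjectProperty D := fun X => X⟦(1:ℤ)⟧ ∈ t.ge

def leZero : ObjectProperty D := fun X => X ∈ t.le

instance : (Et t).HasTwoOutOfThreeProperty :=
  inferInstanceAs ((MorphismProperty.isomorphisms D).inverseImage t.tge).HasTwoOutOfThreeProperty

instance : (Mt t).HasTwoOutOfThreeProperty :=
  inferInstanceAs ((MorphismProperty.isomorphisms D).inverseImage t.tle).HasTwoOutOfThreeProperty

lemma Et_eq_isLocal : Et t = t.geOne.isLocal := by
  ext X Y f
  exact (t.geOne.isLocal_iff_isIso_map_of_isLocal_app t.tge t.ρ t.tge_mem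
    (fun X _ hW => t.tge_univ X hW) f).symm

lemma Mt_eq_isColocal : Mt t = t.leZero.isColocal := by
  ext X Y f
  exact (t.leZero.isColocal_iff_isIso_map_of_isColocal_app t.tle t.σ t.tle_mem
    (fun X _ hA => t.tle_univ hA X) f).symm

lemma isLocal_of_Et {X Y : D} {f : X ⟶ Y} (hf : Et t f) : t.geOne.isLocal f :=
  t.Et_eq_isLocal ▸ hf

lemma isColocal_of_Mt {X Y : D} {f : X ⟶ Y} (hf : Mt t f) : t.leZero.isColocal f :=
  t.Mt_eq_isColocal ▸ hf

lemma geOne_shift_neg_one {X : D} (hX : X ∈ t.ge) : t.geOne (X⟦(-1:ℤ)⟧) :=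
  t.ge_iso ((shiftFunctorCompIsoId D (-1:ℤ) 1 (by omega)).app X).symm hX

lemma mem_le_of_leftOrthogonal {X : D} (h : t.geOne.leftOrthogonal X) : X ∈ t.le := by
  obtain ⟨A, B, i, p, δ, hA, hB, hT⟩ := t.tri X
  have hB0 : IsZero B := by
    rw [IsZero.iff_id_eq_zero]
    obtain ⟨g, hg⟩ := Triangle.yoneda_exact₃ _ hT (𝟙 B) ((comp_id p).trans (h p hB))
    rw [hg, t.hom_zero g (t.shift_le hA) hB, comp_zero]; rfl
  have : IsIso i := (Triangle.isZero₃_iff_isIso₁ _ hT).1 hB0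
  exact t.le_iso (asIso i) hA

lemma geOne_of_rightOrthogonal {X : D} (h : t.leZero.rightOrthogonal X) : t.geOne X := by
  obtain ⟨A, B, i, p, δ, hA, hB, hT⟩ := t.tri X
  have hA0 : IsZero A := by
    rw [IsZero.iff_id_eq_zero]
    obtain ⟨g, hg⟩ := Triangle.coyoneda_exact₂ _ (inv_rot_of_distTriang _ hT) (𝟙 A)
      ((id_comp i).trans (h i hA))
    rw [hg, t.hom_zero g hA (t.geOne_shift_neg_one (t.shift_ge hB)), zero_comp]; rfl
  have : IsIso p := (Triangle.isZero₁_iff_isIso₂ _ hT).1 hA0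
  exact t.ge_iso ((shiftFunctor D (1:ℤ)).mapIso (asIso p).symm) hB

lemma mem_ge_of_forall_shift_eq_zero {X : D}
    (h : ∀ ⦃A : D⦄, A ∈ t.le → ∀ f : A⟦(1:ℤ)⟧ ⟶ X, f = 0) : X ∈ t.ge := by
  let e := (shiftFunctorCompIsoId D (-1:ℤ) 1 (by omega)).app X
  refine t.ge_iso e (t.geOne_of_rightOrthogonal fun A f hA => ?_)
  apply (shiftFunctor D (1:ℤ)).map_injective
  rw [Functor.map_zero, ← cancel_mono e.hom, zero_comp]
  exact h hA _

lemma Et_shift {X Y : D} {f : X ⟶ Y} (hf : Et t f) : Et t (f⟦(1:ℤ)⟧') := by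
  rw [Et_eq_isLocal] at hf ⊢
  intro W hW
  let adj := (shiftEquiv D (1:ℤ)).toAdjunction
  have hcomp : (fun g : Y⟦(1:ℤ)⟧ ⟶ W => f⟦(1:ℤ)⟧' ≫ g)
      = (adj.homEquiv X W).symm ∘ (fun g => f ≫ g) ∘ adj.homEquiv Y W := by
    funext g
    change _ = (adj.homEquiv X W).symm (f ≫ adj.homEquiv Y W g)
    erw [adj.homEquiv_naturality_left_symm, Equiv.symm_apply_apply]
    rfl
  rw [hcomp]
  exact (adj.homEquiv X W).symm.bijective.comp
    ((hf _ (t.geOne_shift_neg_one (t.shift_ge hW))).comp (adj.homEquiv Y W).bijective)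

lemma Et_iff_of_distTriang {X Y C : D} {e : X ⟶ Y} {α : Y ⟶ C} {β : C ⟶ X⟦(1:ℤ)⟧}
    (hT : Triangle.mk e α β ∈ distTriang D) :
    Et t e ↔ C ∈ t.le ∧ ∀ ⦃W : D⦄, t.geOne W → ∀ g : X ⟶ W, β ≫ g⟦(1:ℤ)⟧' = 0 := by
  have heα : e ≫ α = 0 := comp_distTriang_mor_zero₁₂ _ hT
  have hβe : β ≫ e⟦(1:ℤ)⟧' = 0 := comp_distTriang_mor_zero₃₁ _ hT
  rw [Et_eq_isLocal]
  constructor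
  · intro he
    have hβ : ∀ ⦃W : D⦄, t.geOne W → ∀ g : X ⟶ W, β ≫ g⟦(1:ℤ)⟧' = 0 := by
      intro W hW g
      obtain ⟨c, rfl⟩ := (he W hW).2 g
      rw [Functor.map_comp, reassoc_of% hβe, zero_comp]
    refine ⟨t.mem_le_of_leftOrthogonal fun W g hW => ?_, hβ⟩
    have hαg : α ≫ g = 0 := (he W hW).1 (by simp [reassoc_of% heα])
    obtain ⟨y, hy⟩ : ∃ y : X⟦(1:ℤ)⟧ ⟶ W, g = β ≫ y := Triangle.yoneda_exact₃ _ hT g hαg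
    let ε := (shiftFunctorCompIsoId D (-1:ℤ) 1 (by omega)).app W
    obtain ⟨y', hy'⟩ := (shiftFunctor D (1:ℤ)).map_surjective (y ≫ ε.inv)
    calc g = (β ≫ y'⟦(1:ℤ)⟧') ≫ ε.hom := by rw [hy, assoc, hy', assoc, Iso.inv_hom_id, comp_id]
    _ = 0 := by rw [hβ (t.geOne_shift_neg_one (t.shift_ge hW)) y', zero_comp]
  · rintro ⟨hC, hβ⟩ W hW
    constructor
    · refine (injective_iff_map_eq_zero (Preadditive.leftComp W e)).2 fun y hy => ?_
      obtain ⟨z, hz⟩ := Triangle.yoneda_exact₂ _ hT y hy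
      rw [hz, t.hom_zero z hC hW, comp_zero]; rfl
    · intro g
      obtain ⟨k, hk⟩ : ∃ k : Y⟦(1:ℤ)⟧ ⟶ W⟦(1:ℤ)⟧, g⟦(1:ℤ)⟧' = (-e⟦(1:ℤ)⟧') ≫ k :=
        Triangle.yoneda_exact₃ _ (rot_of_distTriang _ hT) (g⟦(1:ℤ)⟧') (hβ hW g)
      obtain ⟨k', rfl⟩ := (shiftFunctor D (1:ℤ)).map_surjective k
      refine ⟨-k', (shiftFunctor D (1:ℤ)).map_injective ?_⟩
      rw [hk, Functor.map_comp, Functor.map_neg, Preadditive.comp_neg, Preadditive.neg_comp]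

lemma Mt_iff_of_distTriang {X Y C : D} {m : X ⟶ Y} {α : Y ⟶ C} {β : C ⟶ X⟦(1:ℤ)⟧}
    (hT : Triangle.mk m α β ∈ distTriang D) :
    Mt t m ↔ C ∈ t.ge ∧ ∀ ⦃A : D⦄, A ∈ t.le → ∀ h : A ⟶ Y, h ≫ α = 0 := by
  have hmα : m ≫ α = 0 := comp_distTriang_mor_zero₁₂ _ hT
  have hβm : β ≫ m⟦(1:ℤ)⟧' = 0 := comp_distTriang_mor_zero₃₁ _ hT
  rw [Mt_eq_isColocal]
  constructor
  · intro hm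
    have hα : ∀ ⦃A : D⦄, A ∈ t.le → ∀ h : A ⟶ Y, h ≫ α = 0 := by
      intro A hA h
      obtain ⟨x, rfl⟩ := (hm A hA).2 h
      rw [assoc, hmα, comp_zero]
    refine ⟨t.mem_ge_of_forall_shift_eq_zero fun A hA g => ?_, hα⟩
    obtain ⟨x, hx⟩ := (shiftFunctor D (1:ℤ)).map_surjective (g ≫ β)
    have hx0 : x = 0 := (hm A hA).1 <| (shiftFunctor D (1:ℤ)).map_injective (by
      simp [hx, hβm])
    obtain ⟨h, rfl⟩ : ∃ h : A⟦(1:ℤ)⟧ ⟶ Y, g = h ≫ α :=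
      Triangle.coyoneda_exact₃ _ hT g (show g ≫ β = 0 by rw [← hx, hx0, Functor.map_zero])
    exact hα (t.shift_le hA) h
  · rintro ⟨hC, hα⟩ A hA
    constructor
    · refine (injective_iff_map_eq_zero (Preadditive.rightComp A m)).2 fun x hx => ?_
      obtain ⟨y, hy⟩ := Triangle.coyoneda_exact₂ _ (inv_rot_of_distTriang _ hT) x hx
      rw [hy, t.hom_zero y hA (t.geOne_shift_neg_one hC), zero_comp]; rfl
    · intro h
      obtain ⟨x, hx⟩ := Triangle.coyoneda_exact₂ _ hT h (hα hA h)
      exact ⟨x, hx.symm⟩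

lemma Et_mor₂_of_distTriang {A X B : D} {a : A ⟶ X} {b : X ⟶ B} {δ : B ⟶ A⟦(1:ℤ)⟧}
    (hT : Triangle.mk a b δ ∈ distTriang D) (hA : A ∈ t.le) : Et t b :=
  (t.Et_iff_of_distTriang (rot_of_distTriang _ hT)).2 ⟨t.shift_le hA, fun W hW (g : X ⟶ W) => by
    change (-a⟦(1:ℤ)⟧') ≫ g⟦(1:ℤ)⟧' = 0
    rw [Preadditive.neg_comp, ← Functor.map_comp, t.hom_zero (a ≫ g) hA hW, Functor.map_zero,
      neg_zero]⟩

lemma Mt_mor₁_of_distTriang {A X B : D} {a : A ⟶ X} {b : X ⟶ B} {δ : B ⟶ A⟦(1:ℤ)⟧}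
    (hT : Triangle.mk a b δ ∈ distTriang D) (hB : t.geOne B) : Mt t a :=
  (t.Mt_iff_of_distTriang hT).2 ⟨t.shift_ge hB, fun _ hA' _ => t.hom_zero _ hA' hB⟩

lemma isIso_of_Et {B B' : D} (hB : t.geOne B) (hB' : t.geOne B') {f : B ⟶ B'} (hf : Et t f) :
    IsIso f :=
  (t.geOne.isLocal_iff_isIso f hB hB').1 (t.isLocal_of_Et hf)

lemma isIso_of_Mt {A A' : D} (hA : A ∈ t.le) (hA' : A' ∈ t.le) {f : A ⟶ A'} (hf : Mt t f) :
    IsIso f :=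
  (t.leZero.isColocal_iff_isIso f hA hA').1 (t.isColocal_of_Mt hf)

lemma eq_zero_of_comp_shift_eq_zero_of_mem_le {Z A Y : D} (hZ : Z ∈ t.le) (hA : A ∈ t.le)
    {u : A ⟶ Y} (hu : Mt t u) {w : Z ⟶ A⟦(1:ℤ)⟧} (hw : w ≫ u⟦(1:ℤ)⟧' = 0) : w = 0 := by
  obtain ⟨A', B', a', b', δ', hA', hB', hT'⟩ := t.tri Y
  have ha' : Mt t a' := t.Mt_mor₁_of_distTriang hT' hB'
  -- `u` is the truncation `a'` up to the isomorphism `c`.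
  obtain ⟨c, hc⟩ : ∃ c, c ≫ a' = u := (t.isColocal_of_Mt ha' A hA).2 u
  have : IsIso c := t.isIso_of_Mt hA hA' ((Mt t).of_postcomp c a' ha' (by rwa [hc]))
  obtain ⟨y, hy⟩ : ∃ y : Z ⟶ B', w ≫ c⟦(1:ℤ)⟧' = y ≫ δ' :=
    Triangle.coyoneda_exact₁ _ hT' (w ≫ c⟦(1:ℤ)⟧')
      (show (w ≫ c⟦(1:ℤ)⟧') ≫ a'⟦(1:ℤ)⟧' = 0 by rw [assoc, ← Functor.map_comp, hc, hw])
  rw [← cancel_mono (c⟦(1:ℤ)⟧'), hy, t.hom_zero y hZ hB', zero_comp, zero_comp]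

lemma eq_zero_of_comp_shift_eq_zero {Z X Y : D} (hZ : Z ∈ t.le) {m : X ⟶ Y} (hm : Mt t m)
    {x : Z ⟶ X⟦(1:ℤ)⟧} (hxm : x ≫ m⟦(1:ℤ)⟧' = 0)
    (hx : ∀ ⦃W : D⦄, t.geOne W → ∀ g : X ⟶ W, x ≫ g⟦(1:ℤ)⟧' = 0) : x = 0 := by
  obtain ⟨A, B, a, b, δ, hA, hB, hT⟩ := t.tri X
  obtain ⟨w, rfl⟩ : ∃ w : Z ⟶ A⟦(1:ℤ)⟧, x = w ≫ (-a⟦(1:ℤ)⟧') :=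
    Triangle.coyoneda_exact₃ _ (rot_of_distTriang _ (rot_of_distTriang _ hT)) x
      (show x ≫ (-b⟦(1:ℤ)⟧') = 0 by rw [Preadditive.comp_neg, hx hB b, neg_zero])
  have hu : Mt t (a ≫ m) := (Mt t).comp_mem _ _ (t.Mt_mor₁_of_distTriang hT hB) hm
  rw [t.eq_zero_of_comp_shift_eq_zero_of_mem_le hZ hA hu (w := w) (by simpa using hxm), zero_comp]

lemma HOrth_of_Et_of_Mt {E₀ E₁ M₀ M₁ : D} {e : E₀ ⟶ E₁} {m : M₀ ⟶ M₁} (he : Et t e)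
    (hm : Mt t m) : HOrth e m := by
  intro Ce αe βe hTe Cm αm βm hTm
  obtain ⟨hCe, hβe⟩ := (t.Et_iff_of_distTriang hTe).1 he
  obtain ⟨hCm, hαm⟩ := (t.Mt_iff_of_distTriang hTm).1 hm
  have hβm : βm ≫ m⟦(1:ℤ)⟧' = 0 := comp_distTriang_mor_zero₃₁ _ hTm
  refine ⟨fun φ => by rw [t.hom_zero φ hCe (t.geOne_shift_neg_one hCm)]; simp, ?_⟩
  refine (injective_iff_map_eq_zero
    ((Preadditive.leftComp _ αe).comp (Preadditive.rightComp Ce βm))).2 fun ψ hψ => ?_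
  obtain ⟨ξ, hξ⟩ : ∃ ξ : E₀⟦(1:ℤ)⟧ ⟶ M₀⟦(1:ℤ)⟧, ψ ≫ βm = βe ≫ ξ :=
    Triangle.yoneda_exact₃ _ hTe (ψ ≫ βm) hψ
  obtain ⟨ξ₀, rfl⟩ := (shiftFunctor D (1:ℤ)).map_surjective ξ
  have hψβ : ψ ≫ βm = 0 := t.eq_zero_of_comp_shift_eq_zero hCe hm
    (by rw [assoc, hβm, comp_zero])
    (fun W hW g => by rw [hξ, assoc, ← Functor.map_comp, hβe hW])
  obtain ⟨h, rfl⟩ : ∃ h : Ce ⟶ M₁, ψ = h ≫ αm := Triangle.coyoneda_exact₃ _ hTm ψ hψβ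
  exact hαm hCe h

lemma Et_toZero_of_mem_le {A : D} (hA : A ∈ t.le) : Et t (0 : A ⟶ 0) :=
  (t.Et_iff_of_distTriang (contractible_distinguished₂ A)).2
    ⟨t.shift_le hA, fun W hW g => by rw [t.hom_zero g hA hW, Functor.map_zero, comp_zero]⟩

lemma Et_fromZero_of_mem_le {A : D} (hA : A ∈ t.le) : Et t (0 : 0 ⟶ A) :=
  (t.Et_iff_of_distTriang (contractible_distinguished₁ A)).2 ⟨hA, fun _ _ _ => zero_comp⟩

lemma Mt_toZero_iff {B : D} : Mt t (0 : B ⟶ 0) ↔ t.geOne B :=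
  (t.Mt_iff_of_distTriang (contractible_distinguished₂ B)).trans
    ⟨fun h => h.1, fun hB => ⟨hB, fun _ _ _ => comp_zero⟩⟩

lemma Mt_fromZero_of_geOne {B : D} (hB : t.geOne B) : Mt t (0 : 0 ⟶ B) :=
  (t.Mt_iff_of_distTriang (contractible_distinguished₁ B)).2
    ⟨t.shift_ge hB, fun _ hA h => by rw [comp_id]; exact t.hom_zero h hA hB⟩

lemma Mt_of_rightOrth {X Y : D} {m : X ⟶ Y} (h : rightOrth (Et t) m) : Mt t m := by
  obtain ⟨C, α, β, hT⟩ := distinguished_cocone_triangle m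
  have hαβ : α ≫ β = 0 := comp_distTriang_mor_zero₂₃ _ hT
  refine (t.Mt_iff_of_distTriang hT).2
    ⟨t.mem_ge_of_forall_shift_eq_zero fun A hA g => ?_, fun A hA g => ?_⟩
  · exact (h _ (t.Et_toZero_of_mem_le hA) _ _ _ (contractible_distinguished₂ A) _ _ _ hT).2
      (a₂ := 0) (by simp)
  · exact (h _ (t.Et_fromZero_of_mem_le hA) _ _ _ (contractible_distinguished₁ A) _ _ _ hT).2
      (a₂ := 0) (by simp [hαβ])

lemma Et_of_leftOrth {X Y : D} {e : X ⟶ Y} (h : leftOrth (Mt t) e) : Et t e := by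
  obtain ⟨C, α, β, hT⟩ := distinguished_cocone_triangle e
  have hαβ : α ≫ β = 0 := comp_distTriang_mor_zero₂₃ _ hT
  refine (t.Et_iff_of_distTriang hT).2
    ⟨t.mem_le_of_leftOrthogonal fun W g hW => ?_, fun W hW g => ?_⟩
  · exact (h _ (t.Mt_fromZero_of_geOne hW) _ _ _ hT _ _ _ (contractible_distinguished₁ W)).2
      (a₂ := 0) (by simp)
  · exact (h _ (t.Mt_toZero_iff.2 hW) _ _ _ hT _ _ _ (contractible_distinguished₂ W)).2
      (a₂ := 0) (by simp [reassoc_of% hαβ])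

lemma rightOrth_Et : rightOrth (Et t) = Mt t := by
  ext X Y m
  exact ⟨t.Mt_of_rightOrth, fun hm _ _ _ he => t.HOrth_of_Et_of_Mt he hm⟩

lemma leftOrth_Mt : leftOrth (Mt t) = Et t := by
  ext X Y e
  exact ⟨t.Et_of_leftOrth, fun he _ _ _ hm => t.HOrth_of_Et_of_Mt he hm⟩

lemma mem_le_of_distTriang {R X T : D} {r : R ⟶ X} {e : X ⟶ T} {δ : T ⟶ R⟦(1:ℤ)⟧}
    (hT : Triangle.mk r e δ ∈ distTriang D) (he : Et t e) (hT' : t.geOne T) : R ∈ t.le := by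
  obtain ⟨A, B, a, b, δX, hA, hB, hTX⟩ := t.tri X
  have hb : Et t b := t.Et_mor₂_of_distTriang hTX hA
  obtain ⟨v, hv⟩ : ∃ v : B ⟶ T, b ≫ v = e :=
    (t.isLocal_of_Et hb T hT').2 e
  have : IsIso v := t.isIso_of_Et hB hT' ((Et t).of_precomp b v hb (by rwa [hv]))
  have hv' : b ≫ v = 𝟙 X ≫ e := hv.trans (id_comp e).symm
  obtain ⟨u, hu₁, hu₂⟩ : ∃ u : A ⟶ R, a ≫ 𝟙 X = u ≫ r ∧ δX ≫ u⟦(1:ℤ)⟧' = v ≫ δ :=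
    complete_distinguished_triangle_morphism₁ _ _ hTX hT (𝟙 X) v hv'
  have : IsIso u := isIso₁_of_isIso₂₃ (Triangle.homMk (Triangle.mk a b δX) (Triangle.mk r e δ)
    u (𝟙 X) v hu₁ hv' hu₂) hTX hT (inferInstanceAs (IsIso (𝟙 X))) (inferInstanceAs (IsIso v))
  exact t.le_iso (asIso u) hA

lemma exists_Et_comp_Mt {X Y : D} (f : X ⟶ Y) :
    ∃ (P : D) (e : X ⟶ P) (m : P ⟶ Y), Et t e ∧ Mt t m ∧ e ≫ m = f := by
  obtain ⟨AX, BX, aX, bX, δX, hAX, hBX, hTX⟩ := t.tri X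
  obtain ⟨AY, BY, aY, bY, δY, hAY, hBY, hTY⟩ := t.tri Y
  have haY : Mt t aY := t.Mt_mor₁_of_distTriang hTY hBY
  obtain ⟨a, ha⟩ : ∃ a : AX ⟶ AY, a ≫ aY = aX ≫ f :=
    (t.isColocal_of_Mt haY AX hAX).2 (aX ≫ f)
  obtain ⟨b, -, hb⟩ : ∃ b : BX ⟶ BY, bX ≫ b = f ≫ bY ∧ δX ≫ a⟦(1:ℤ)⟧' = b ≫ δY :=
    complete_distinguished_triangle_morphism _ _ hTX hTY a f ha.symm
  -- `P` glues `τ^{≤0} Y` and `τ^{≥1} X` along the connecting map `BX ⟶ AY⟦1⟧`.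
  obtain ⟨P, s, p, hTP⟩ := distinguished_cocone_triangle₂ (b ≫ δY)
  obtain ⟨e, he₁, he₂⟩ : ∃ e : X ⟶ P, aX ≫ e = a ≫ s ∧ bX ≫ 𝟙 BX = e ≫ p :=
    complete_distinguished_triangle_morphism₂ _ _ hTX hTP a (𝟙 BX)
      (show δX ≫ a⟦(1:ℤ)⟧' = 𝟙 BX ≫ b ≫ δY by rw [id_comp, hb])
  obtain ⟨m, hm, -⟩ : ∃ m : P ⟶ Y, s ≫ m = 𝟙 AY ≫ aY ∧ p ≫ b = m ≫ bY :=
    complete_distinguished_triangle_morphism₂ _ _ hTP hTY (𝟙 AY) b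
      (show (b ≫ δY) ≫ (𝟙 AY)⟦(1:ℤ)⟧' = b ≫ δY by simp)
  obtain ⟨ξ, hξ⟩ : ∃ ξ : BX ⟶ Y, f - e ≫ m = bX ≫ ξ := Triangle.yoneda_exact₂ _ hTX _
    (show aX ≫ (f - e ≫ m) = 0 by
      rw [Preadditive.comp_sub, reassoc_of% he₁, hm, id_comp, ha, sub_self])
  have hsp : s ≫ p = 0 := comp_distTriang_mor_zero₁₂ _ hTP
  -- Adding `p ≫ ξ` to `m` keeps `s ≫ m = aY` and repairs `e ≫ m = f`.
  refine ⟨P, e, m + p ≫ ξ, ?_, ?_, ?_⟩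
  · exact (Et t).of_postcomp e p (t.Et_mor₂_of_distTriang hTP hAY)
      (by simpa [← he₂] using t.Et_mor₂_of_distTriang hTX hAX)
  · exact (Mt t).of_precomp s _ (t.Mt_mor₁_of_distTriang hTP hBX)
      (by simpa [reassoc_of% hsp, hm] using haY)
  · rw [Preadditive.comp_add, ← assoc, ← he₂, comp_id, ← hξ, add_sub_cancel]

end TData

end TStructure

section Statements

variable {D : Type u} [Category.{v} D] [HasZeroObject D] [Preadditive D]
  [HasShift D ℤ] [∀ n : ℤ, (shiftFunctor D n).Additive] [Pretriangulated D]

/-- Lemma 2.9: `(E_t, M_t)` is a normal triangulated torsion theory. -/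
theorem Ft_is_normal_TTT (t : TData D) : IsNormalTTT (Et t) (Mt t) :=
  { right_eq := t.rightOrth_Et
    left_eq := t.leftOrth_Mt
    shiftE := fun _ _ _ hf => t.Et_shift hf
    fact := fun _ _ f => t.exists_Et_comp_Mt f
    three_E := threeForTwo_of_hasTwoOutOfThreeProperty _
    three_M := threeForTwo_of_hasTwoOutOfThreeProperty _
    normal := fun _ T e m he hm _ _ _ hT => by
      obtain rfl : m = 0 := (isZero_zero D).eq_of_tgt _ _
      exact t.Et_toZero_of_mem_le (t.mem_le_of_distTriang hT he (t.Mt_toZero_iff.1 hm)) }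

end Statements
end

section
/- Let D be a triangulated category and F = (E, M) a normal triangulated torsion theory. Then the pair (0/E, Σ(M/0)) is a t-structure on D, where 0/E = {X : (0 → X) ∈ E} and M/0 = {X : (X → 0) ∈ M}. -/
open CategoryTheory Category Limits Pretriangulated ZeroObject

universe v u w

section Statements

variable {D : Type u} [Category.{v} D] [HasZeroObject D] [Preadditive D]
  [HasShift D ℤ] [∀ n : ℤ, (shiftFunctor D n).Additive] [Pretriangulated D]

lemma hOrth_of_isIso_left {E₀ E₁ M₀ M₁ : D} (e : E₀ ⟶ E₁) [IsIso e] (m : M₀ ⟶ M₁) :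
    HOrth e m := by
  intro Ce αe βe hTe Cm αm βm _
  have hCe : IsZero Ce := (Triangle.mk e αe βe).isZero₃_of_isIso₁ hTe ‹_›
  exact ⟨fun φ => by rw [hCe.eq_of_src φ 0, zero_comp, comp_zero],
    fun φ ψ _ => hCe.eq_of_src φ ψ⟩

/-- Every cone of `W ⟶ 0` is `W⟦1⟧` up to isomorphism, so only the completion of `e` matters. -/
lemma hOrth_toZero_iff {E₀ E₁ W : D} (e : E₀ ⟶ E₁) :
    HOrth e (0 : W ⟶ 0) ↔ ∀ (Ce : D) (αe : E₁ ⟶ Ce) (βe : Ce ⟶ E₀⟦(1:ℤ)⟧),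
      Triangle.mk e αe βe ∈ distTriang D →
      (∀ χ : Ce ⟶ W, αe ≫ χ = 0) ∧ Function.Injective (fun χ : Ce ⟶ W⟦(1:ℤ)⟧ => αe ≫ χ) := by
  let ε := (shiftFunctorCompIsoId D (1:ℤ) (-1:ℤ) (by omega)).app W
  constructor
  · intro he Ce αe βe hTe
    obtain ⟨hzero, hinj⟩ := he Ce αe βe hTe _ 0 (𝟙 _) (contractible_distinguished₂ W)
    refine ⟨fun χ => ?_, fun χ χ' hχ => hinj (by simpa using hχ)⟩
    simpa [ε] using hzero (χ ≫ ε.inv)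
  · intro he Ce αe βe hTe Cm αm βm hTm
    obtain ⟨hzero, hinj⟩ := he Ce αe βe hTe
    have : IsIso βm := (Triangle.isZero₂_iff_isIso₃ _ hTm).1 (isZero_zero D)
    exact ⟨fun φ => hzero _, fun φ ψ hφψ => (cancel_mono βm).1 (hinj (by simpa using hφψ))⟩

lemma HOrth.hom_eq_zero {X Y : D} (hXY : HOrth (0 : 0 ⟶ X) (0 : Y ⟶ 0)) (f : X ⟶ Y) :
    f = 0 := by
  simpa using ((hOrth_toZero_iff _).1 hXY _ _ _ (contractible_distinguished₁ X)).1 f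

lemma HOrth.toZero_of_retract {E₀ E₁ W B : D} {e : E₀ ⟶ E₁} {p : W ⟶ B} {q : B ⟶ W}
    (hpq : p ≫ q = 𝟙 W) (hB : HOrth e (0 : B ⟶ 0)) : HOrth e (0 : W ⟶ 0) := by
  rw [hOrth_toZero_iff] at hB ⊢
  intro Ce αe βe hTe
  obtain ⟨hzero, hinj⟩ := hB Ce αe βe hTe
  refine ⟨fun χ => ?_, fun χ χ' hχ => ?_⟩
  · simpa [hpq] using hzero (χ ≫ p) =≫ q
  · have : χ ≫ p⟦(1:ℤ)⟧' = χ' ≫ p⟦(1:ℤ)⟧' := hinj (by simpa using hχ =≫ p⟦(1:ℤ)⟧')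
    simpa [← Functor.map_comp, hpq] using this =≫ q⟦(1:ℤ)⟧'

namespace IsTriPFS

variable {E M : MorphismProperty D} (h : IsTriPFS E M)
include h

lemma left_of_isIso {X Y : D} (f : X ⟶ Y) [IsIso f] : E f := by
  rw [← h.left_eq]
  exact fun _ _ m _ => hOrth_of_isIso_left f m

lemma hom_eq_zero {X Y : D} (hX : E (0 : 0 ⟶ X)) (hY : M (0 : Y ⟶ 0)) (f : X ⟶ Y) : f = 0 :=
  HOrth.hom_eq_zero ((h.left_eq ▸ hX : leftOrth M _) _ hY) f

lemma toZero_of_retract {W B : D} {p : W ⟶ B} {q : B ⟶ W} (hpq : p ≫ q = 𝟙 W)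
    (hB : M (0 : B ⟶ 0)) : M (0 : W ⟶ 0) := by
  rw [← h.right_eq] at hB ⊢
  exact fun _ _ e he => (hB e he).toZero_of_retract hpq

lemma fromZero_shift (hE : ThreeForTwo E) {X : D} (hX : E (0 : 0 ⟶ X)) :
    E (0 : 0 ⟶ X⟦(1:ℤ)⟧) := by
  have hshift : E (0 : (0:D)⟦(1:ℤ)⟧ ⟶ X⟦(1:ℤ)⟧) := by
    simpa using h.shiftE _ hX
  simpa using (hE ((Functor.mapZeroObject (shiftFunctor D (1:ℤ))).inv) _).1
    (h.left_of_isIso _) hshift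

lemma fromZero_of_toZero (hE : ThreeForTwo E) {X : D} (hX : E (0 : X ⟶ 0)) :
    E (0 : 0 ⟶ X) :=
  (hE _ _).2.2 hX (by simpa using h.left_of_isIso (𝟙 (0:D)))

end IsTriPFS

namespace IsNormalTTT

variable {E M : MorphismProperty D} (h : IsNormalTTT E M)
include h

/-- Factor `X ⟶ 0` as `X ⟶ P` in `E` followed by `P ⟶ 0` in `M`; the fibre of the first map lies
in `0/E` by normality and the Sator lemma. -/
lemma exists_truncation (X : D) :
    ∃ (A B : D) (i : A ⟶ X) (p : X ⟶ B) (δ : B ⟶ A⟦(1:ℤ)⟧),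
      E (0 : 0 ⟶ A) ∧ M (0 : B ⟶ 0) ∧ Triangle.mk i p δ ∈ distTriang D := by
  obtain ⟨P, e, m, he, hm, -⟩ := h.fact (0 : X ⟶ 0)
  obtain rfl : m = 0 := (isZero_zero D).eq_of_tgt _ _
  obtain ⟨Q, α, β, hT⟩ := distinguished_cocone_triangle e
  let T := (Triangle.mk e α β).invRotate
  have hT' : Triangle.mk T.mor₁ e T.mor₃ ∈ distTriang D := inv_rot_of_distTriang _ hT
  exact ⟨T.obj₁, P, T.mor₁, e, T.mor₃,
    h.fromZero_of_toZero h.three_E (h.normal e 0 he hm _ _ hT'), hm, hT'⟩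

/-- The `0/E`-truncation `A ⟶ X⟦-1⟧` vanishes by Hom-vanishing against `X`, so `X⟦-1⟧` is a
retract of its `M/0`-truncation. -/
lemma toZero_shift_neg_one {X : D} (hX : M (0 : X ⟶ 0)) : M (0 : X⟦(-1:ℤ)⟧ ⟶ 0) := by
  obtain ⟨A, B, i, p, δ, hA, hB, hT⟩ := h.exists_truncation (X⟦(-1:ℤ)⟧)
  let ε := (shiftFunctorCompIsoId D (-1:ℤ) (1:ℤ) (by omega)).app X
  have hi : i = 0 := by
    have : i⟦(1:ℤ)⟧' ≫ ε.hom = 0 :=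
      h.hom_eq_zero (h.fromZero_shift h.three_E hA) hX _
    rwa [Preadditive.IsIso.comp_right_eq_zero, Functor.map_eq_zero_iff] at this
  obtain ⟨q, hq⟩ := Triangle.yoneda_exact₂ _ hT (𝟙 _)
    (by rw [Triangle.mk_mor₁, hi]; exact zero_comp)
  exact h.toZero_of_retract hq.symm hB

end IsNormalTTT

/-- Lemma 2.10: for a normal triangulated torsion theory `(E, M)`, the pair
`(0/E, Σ(M/0))` is a t-structure: Hom-vanishing (with `D^{≥1} = M/0`), the two
shift-closure conditions, and the existence of truncation triangles. -/
theorem normalTTT_gives_tStructure (E M : MorphismProperty D) (h : IsNormalTTT E M) :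
    (∀ ⦃X Y : D⦄ (f : X ⟶ Y), E (0 : (0:D) ⟶ X) → M (0 : Y ⟶ (0:D)) → f = 0) ∧
    (∀ X : D, E (0 : (0:D) ⟶ X) → E (0 : (0:D) ⟶ X⟦(1:ℤ)⟧)) ∧
    (∀ X : D, M (0 : X ⟶ (0:D)) → M (0 : X⟦(-1:ℤ)⟧ ⟶ (0:D))) ∧
    (∀ X : D, ∃ (A B : D) (i : A ⟶ X) (p : X ⟶ B) (δ : B ⟶ A⟦(1:ℤ)⟧),
      E (0 : (0:D) ⟶ A) ∧ M (0 : B ⟶ (0:D)) ∧ Triangle.mk i p δ ∈ (distTriang D)) :=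
  ⟨fun _ _ f hX hY => h.hom_eq_zero hX hY f,
    fun _ => h.fromZero_shift h.three_E,
    fun _ => h.toZero_shift_neg_one,
    h.exists_truncation⟩

end Statements
end
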